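/- arXiv:1308.5400 — 6 statements merged into one kernel-verified Lean document; each statement's English description precedes it below -/
import Mathlib

section
/- Let I be a squarefree monomial ideal in S = K[x_1,...,x_n] and k ≥ 1. If the monomial x_1^{a_1}···x_n^{a_n} is a socle element of S/I^k, then a_i ≤ k − 1 for all i = 1,...,n. -/
open MvPolynomial Pointwise

section Aux

variable {n : ℕ} {K : Type*} [Field K]

/-- k-fold sumset of a set of exponents. -/
def powSet (B : Set (Fin n →₀ ℕ)) : ℕ → Set (Fin n →₀ ℕ)
  | 0 => {0}
  | k + 1 => powSet B k + B

lemma span_monomial_pow (B : Set (Fin n →₀ ℕ)) (k : ℕ) :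
    (Ideal.span ((fun s => monomial s (1 : K)) '' B)) ^ k =
      Ideal.span ((fun s => monomial s (1 : K)) '' powSet B k) := by
  induction k with
  | zero =>
      simp only [pow_zero, powSet, Set.image_singleton, monomial_zero', C_1]
      rw [Ideal.span_singleton_one, Ideal.one_eq_top]
  | succ k ih =>
      rw [pow_succ, ih, Ideal.span_mul_span']
      congr 1
      ext p
      constructor
      · rintro ⟨x, ⟨s, hs, rfl⟩, y, ⟨t, ht, rfl⟩, rfl⟩
        exact ⟨s + t, ⟨s, hs, t, ht, rfl⟩, by simp [monomial_mul]⟩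
      · rintro ⟨u, ⟨s, hs, t, ht, rfl⟩, rfl⟩
        exact ⟨monomial s 1, ⟨s, hs, rfl⟩, monomial t 1, ⟨t, ht, rfl⟩,
          by simp [monomial_mul]⟩

lemma powSet_bound {B : Set (Fin n →₀ ℕ)} (hB : ∀ d ∈ B, ∀ j, d j ≤ 1) :
    ∀ k, ∀ d ∈ powSet B k, ∀ j, d j ≤ k := by
  intro k
  induction k with
  | zero => rintro d hd j; simp only [powSet, Set.mem_singleton_iff] at hd; simp [hd]
  | succ k ih =>
      rintro d ⟨s, hs, t, ht, rfl⟩ j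
      simpa using Nat.add_le_add (ih s hs j) (hB t ht j)

lemma prodX_eq (F : Finset (Fin n)) :
    ∏ i ∈ F, (X i : MvPolynomial (Fin n) K) =
      monomial (∑ i ∈ F, Finsupp.single i 1) 1 := by
  rw [monomial_sum_one]
  exact Finset.prod_congr rfl fun i _ => rfl

end Aux

/-- If `x^a` is a socle element of `S/I^k` for a squarefree monomial ideal `I`,
then `aᵢ ≤ k - 1` for all `i`. -/
theorem stmt1 (n : ℕ) (K : Type*) [Field K]
    (𝒮 : Set (Finset (Fin n)))
    (I : Ideal (MvPolynomial (Fin n) K))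
    (hI : I = Ideal.span ((fun F : Finset (Fin n) => ∏ i ∈ F, (X i : MvPolynomial (Fin n) K)) '' 𝒮))
    (k : ℕ) (hk : 1 ≤ k)
    (a : Fin n →₀ ℕ)
    (hsoc : (monomial a (1 : K)) ∉ I ^ k ∧ ∀ i : Fin n, X i * monomial a (1 : K) ∈ I ^ k) :
    ∀ i : Fin n, a i ≤ k - 1 := by
  set f : Finset (Fin n) → (Fin n →₀ ℕ) := fun F => ∑ i ∈ F, Finsupp.single i 1 with hf
  have hIm : I = Ideal.span ((fun s => monomial s (1 : K)) '' (f '' 𝒮)) := by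
    have himg : (fun F : Finset (Fin n) => ∏ i ∈ F, (X i : MvPolynomial (Fin n) K)) '' 𝒮
        = (fun s => monomial s (1 : K)) '' (f '' 𝒮) := by
      rw [Set.image_image]
      exact Set.image_congr' fun F => prodX_eq F
    rw [hI, himg]
  have hBd : ∀ d ∈ f '' 𝒮, ∀ j, d j ≤ 1 := by
    rintro d ⟨F, hF, rfl⟩ j
    simp only [hf, Finsupp.finset_sum_apply, Finsupp.single_apply, Finset.sum_ite_eq']
    split_ifs <;> omega
  intro i
  by_contra h
  push_neg at h
  have hai : k ≤ a i := by omega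
  have hmem := hsoc.2 i
  rw [hIm, span_monomial_pow, mem_ideal_span_monomial_image] at hmem
  have hXsupp : (X i * monomial a (1 : K)).support = {Finsupp.single i 1 + a} := by
    rw [X, monomial_mul, one_mul]
    classical rw [support_monomial, if_neg one_ne_zero]
  rw [hXsupp] at hmem
  obtain ⟨d, hd, hda⟩ := hmem (Finsupp.single i 1 + a) (Finset.mem_singleton_self _)
  apply hsoc.1
  rw [hIm, span_monomial_pow, mem_ideal_span_monomial_image]
  intro xi hxi
  classical rw [support_monomial, if_neg one_ne_zero, Finset.mem_singleton] at hxi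
  rw [hxi]
  refine ⟨d, hd, fun j => ?_⟩
  by_cases hji : j = i
  · subst hji
    have := powSet_bound hBd k d hd j
    omega
  · have h2 : d j ≤ (if i = j then 1 else 0) + a j := by
      simpa [Finsupp.single_apply] using hda j
    rw [if_neg (fun h => hji h.symm)] at h2
    omega
end

section
/- Let Δ be a simplicial complex on vertex set [n] with facet ideal I = I(Δ) ⊂ S = K[x_1,...,x_n], and let k ≥ 1. Then (x_1···x_n)^{k−1} ∉ I^k if and only if every k facets F_1,...,F_k ∈ F(Δ) (with repetition allowed) have nonempty intersection F_1 ∩ ··· ∩ F_k ≠ ∅. -/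
open MvPolynomial Pointwise

private noncomputable def stmt6Ind {n : ℕ} (F : Finset (Fin n)) : Fin n →₀ ℕ :=
  ∑ j ∈ F, Finsupp.single j 1

private lemma stmt6Ind_apply {n : ℕ} (F : Finset (Fin n)) (j : Fin n) :
    stmt6Ind F j = if j ∈ F then 1 else 0 := by
  simp [stmt6Ind, Finset.sum_apply', Finsupp.single_apply]

private lemma stmt6_prod_X {n : ℕ} {K : Type*} [Field K] (F : Finset (Fin n)) :
    ∏ i ∈ F, (X i : MvPolynomial (Fin n) K) = monomial (stmt6Ind F) 1 := by
  classical
  induction F using Finset.induction with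
  | empty => simp [stmt6Ind]
  | @insert a s h ih =>
    rw [Finset.prod_insert h, ih, X, monomial_mul, one_mul, stmt6Ind, stmt6Ind,
      Finset.sum_insert h]

private lemma stmt6_prod_monomial {ι : Type*} {n : ℕ} {K : Type*} [Field K] (s : Finset ι)
    (d : ι → Fin n →₀ ℕ) :
    ∏ i ∈ s, monomial (d i) (1 : K) = monomial (∑ i ∈ s, d i) 1 := by
  classical
  induction s using Finset.induction with
  | empty => simp
  | @insert a s h ih => rw [Finset.prod_insert h, ih, monomial_mul, one_mul, Finset.sum_insert h]

/-- For the facet ideal `I` of a simplicial complex with facet set `ℱ`: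
`(x₁⋯xₙ)^(k-1) ∉ I^k` iff any `k` facets (with repetition) have nonempty
intersection. -/
theorem stmt6 (n : ℕ) (K : Type*) [Field K]
    (ℱ : Set (Finset (Fin n))) (hne : ∀ F ∈ ℱ, F.Nonempty)
    (I : Ideal (MvPolynomial (Fin n) K))
    (hI : I = Ideal.span ((fun F : Finset (Fin n) => ∏ i ∈ F, (X i : MvPolynomial (Fin n) K)) '' ℱ))
    (k : ℕ) (hk : 1 ≤ k) :
    ((∏ i : Fin n, (X i : MvPolynomial (Fin n) K)) ^ (k - 1) ∉ I ^ k)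
      ↔ (∀ F : Fin k → Finset (Fin n), (∀ i, F i ∈ ℱ) → ∃ j : Fin n, ∀ i, j ∈ F i) := by
  classical
  subst hI
  set D : Set (Fin n →₀ ℕ) :=
    {d | ∃ F : Fin k → Finset (Fin n), (∀ i, F i ∈ ℱ) ∧ ∑ i, stmt6Ind (F i) = d} with hD
  set s : Set (MvPolynomial (Fin n) K) :=
    (fun F : Finset (Fin n) => ∏ i ∈ F, (X i : MvPolynomial (Fin n) K)) '' ℱ with hs
  have hpow : (Ideal.span s) ^ k
      = Ideal.span ((fun d => monomial d (1 : K)) '' D) := by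
    rw [show Ideal.span s ^ k = Ideal.span (s ^ k) from Submodule.span_pow s k]
    congr 1
    ext x
    rw [Set.mem_pow]
    constructor
    · rintro ⟨f, hf⟩
      have h1 : ∀ i : Fin k, ∃ G ∈ ℱ,
          (∏ j ∈ G, (X j : MvPolynomial (Fin n) K)) = (f i : MvPolynomial (Fin n) K) :=
        fun i => (f i).2
      choose G hG hG2 using h1
      refine ⟨∑ i, stmt6Ind (G i), ⟨G, hG, rfl⟩, ?_⟩
      rw [← hf, List.prod_ofFn]
      show monomial (∑ i : Fin k, stmt6Ind (G i)) (1 : K) = _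
      rw [← stmt6_prod_monomial]
      exact (Finset.prod_congr rfl fun i _ => by rw [← hG2 i, stmt6_prod_X]).symm
    · rintro ⟨d, ⟨F, hF, rfl⟩, rfl⟩
      refine ⟨fun i => ⟨∏ j ∈ F i, (X j : MvPolynomial (Fin n) K), ⟨F i, hF i, rfl⟩⟩, ?_⟩
      rw [List.prod_ofFn]
      simp only
      rw [← stmt6_prod_monomial]
      exact Finset.prod_congr rfl fun i _ => by rw [stmt6_prod_X]
  have hbig : (∏ i : Fin n, (X i : MvPolynomial (Fin n) K)) ^ (k - 1)
      = monomial ((k - 1) • stmt6Ind (Finset.univ : Finset (Fin n))) 1 := by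
    rw [stmt6_prod_X, monomial_pow, one_pow]
  rw [hpow, hbig, mem_ideal_span_monomial_image]
  have hsupp : (monomial ((k - 1) • stmt6Ind (Finset.univ : Finset (Fin n))) (1 : K)).support
      = {(k - 1) • stmt6Ind (Finset.univ : Finset (Fin n))} := by
    rw [support_monomial, if_neg one_ne_zero]
  rw [hsupp]
  simp only [Finset.mem_singleton, forall_eq, not_exists, not_and]
  constructor
  · intro h F hF
    have hd := h (∑ i, stmt6Ind (F i)) ⟨F, hF, rfl⟩
    rw [Finsupp.le_def, not_forall] at hd
    obtain ⟨j, hj⟩ := hd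
    rw [not_le] at hj
    refine ⟨j, fun i => ?_⟩
    have hval : (∑ i : Fin k, stmt6Ind (F i)) j
        = (Finset.univ.filter fun i : Fin k => j ∈ F i).card := by
      rw [Finset.sum_apply']
      rw [Finset.card_filter]
      exact Finset.sum_congr rfl fun i _ => by rw [stmt6Ind_apply]
    have he : ((k - 1) • stmt6Ind (Finset.univ : Finset (Fin n))) j = k - 1 := by
      rw [Finsupp.smul_apply, stmt6Ind_apply, if_pos (Finset.mem_univ j), smul_eq_mul, mul_one]
    rw [hval, he] at hj
    by_contra hji
    have hlt : (Finset.univ.filter fun i : Fin k => j ∈ F i).card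
        < (Finset.univ : Finset (Fin k)).card := by
      refine Finset.card_lt_card ?_
      refine ⟨Finset.filter_subset _ _, fun hsub => hji ?_⟩
      have := hsub (Finset.mem_univ i)
      exact (Finset.mem_filter.mp this).2
    rw [Finset.card_univ, Fintype.card_fin] at hlt
    omega
  · rintro h d ⟨F, hF, rfl⟩ hle
    obtain ⟨j, hj⟩ := h F hF
    have hval : (∑ i : Fin k, stmt6Ind (F i)) j = k := by
      rw [Finset.sum_apply']
      have : ∀ i : Fin k, stmt6Ind (F i) j = 1 := fun i => by
        rw [stmt6Ind_apply, if_pos (hj i)]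
      simp [this]
    have hle' := hle j
    have he : ((k - 1) • stmt6Ind (Finset.univ : Finset (Fin n))) j = k - 1 := by
      rw [Finsupp.smul_apply, stmt6Ind_apply, if_pos (Finset.mem_univ j), smul_eq_mul, mul_one]
    rw [hval, he] at hle'
    omega
end

section
/- Let Δ be a simplicial complex on [n] with facet ideal I = I(Δ) and k ≥ 1. The monomial (x_1···x_n)^{k−1} is a socle element of S/I^k if and only if (i) every k facets of Δ have nonempty intersection, and (ii) for each j ∈ [n] there exist k facets whose intersection equals {j}. -/
open MvPolynomial

section Aux

open Finsupp Pointwise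

variable {n : ℕ} {K : Type*} [Field K]

/-- exponent vector of the squarefree monomial of a finset -/
noncomputable def eF (F : Finset (Fin n)) : Fin n →₀ ℕ := ∑ i ∈ F, Finsupp.single i 1

lemma eF_apply (F : Finset (Fin n)) (i : Fin n) : eF F i = if i ∈ F then 1 else 0 := by
  classical
  rw [eF, Finsupp.finset_sum_apply]
  simp [Finsupp.single_apply, Finset.sum_ite_eq' F i (fun _ => 1)]

lemma prod_X_eq (F : Finset (Fin n)) :
    ∏ i ∈ F, (X i : MvPolynomial (Fin n) K) = monomial (eF F) 1 := by
  classical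
  rw [eF]
  induction F using Finset.induction with
  | empty => simp
  | insert _ _ h ih =>
      rename_i a F
      rw [Finset.prod_insert h, Finset.sum_insert h, ih, X, monomial_mul, one_mul]

lemma prod_monomial {ι : Type*} (s : Finset ι) (d : ι → (Fin n →₀ ℕ)) :
    ∏ t ∈ s, (monomial (d t) (1 : K)) = monomial (∑ t ∈ s, d t) 1 := by
  classical
  induction s using Finset.induction with
  | empty => simp
  | insert _ _ h ih =>
      rename_i a s
      rw [Finset.prod_insert h, Finset.sum_insert h, ih, monomial_mul, one_mul]

lemma sum_eF_apply {k : ℕ} (F : Fin k → Finset (Fin n)) (i : Fin n) :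
    (∑ t, eF (F t)) i = (Finset.univ.filter (fun t => i ∈ F t)).card := by
  classical
  rw [Finsupp.finset_sum_apply, Finset.card_filter]
  simp [eF_apply]

/-- membership criterion for a monomial in the `k`-th power of the facet ideal -/
lemma mem_pow_iff (ℱ : Set (Finset (Fin n))) (k : ℕ) (d : Fin n →₀ ℕ) :
    monomial d (1 : K) ∈
        (Ideal.span ((fun F : Finset (Fin n) =>
          ∏ i ∈ F, (X i : MvPolynomial (Fin n) K)) '' ℱ)) ^ k ↔
      ∃ F : Fin k → Finset (Fin n), (∀ i, F i ∈ ℱ) ∧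
        ∀ i, (Finset.univ.filter (fun t => i ∈ F t)).card ≤ d i := by
  classical
  have himg : (fun F : Finset (Fin n) =>
      ∏ i ∈ F, (X i : MvPolynomial (Fin n) K)) '' ℱ =
      (fun F : Finset (Fin n) => monomial (eF F) (1 : K)) '' ℱ := by
    apply Set.image_congr'
    intro F
    exact prod_X_eq F
  set T : Set (Fin n →₀ ℕ) :=
    {d' | ∃ F : Fin k → Finset (Fin n), (∀ i, F i ∈ ℱ) ∧ d' = ∑ t, eF (F t)} with hT
  have hpow : ((fun F : Finset (Fin n) => monomial (eF F) (1 : K)) '' ℱ) ^ k =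
      (fun s => monomial s (1 : K)) '' T := by
    ext a
    rw [Set.mem_pow]
    constructor
    · rintro ⟨f, rfl⟩
      have hmem : ∀ i : Fin k, ∃ F ∈ ℱ, monomial (eF F) (1 : K) = (f i : _) :=
        fun i => (f i).2
      choose Fc hFc hFc2 using hmem
      refine ⟨∑ t, eF (Fc t), ⟨Fc, hFc, rfl⟩, ?_⟩
      rw [List.prod_ofFn]
      exact (prod_monomial Finset.univ fun t => eF (Fc t)).symm.trans
        (Finset.prod_congr rfl fun t _ => hFc2 t)
    · rintro ⟨d', ⟨F, hF, rfl⟩, rfl⟩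
      refine ⟨fun i => ⟨monomial (eF (F i)) 1, ⟨F i, hF i, rfl⟩⟩, ?_⟩
      rw [List.prod_ofFn]
      exact prod_monomial _ _
  have hsp : (Ideal.span ((fun F : Finset (Fin n) => monomial (eF F) (1 : K)) '' ℱ)) ^ k =
      Ideal.span ((((fun F : Finset (Fin n) => monomial (eF F) (1 : K)) '' ℱ)) ^ k) :=
    Submodule.span_pow _ k
  rw [himg, hsp, hpow, mem_ideal_span_monomial_image]
  have hsupp : (monomial d (1 : K)).support = {d} := by
    rw [support_monomial, if_neg one_ne_zero]
  rw [hsupp]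
  simp only [Finset.mem_singleton, forall_eq]
  constructor
  · rintro ⟨si, ⟨F, hF, rfl⟩, hle⟩
    refine ⟨F, hF, fun i => ?_⟩
    rw [← sum_eF_apply]
    exact Finsupp.le_def.mp hle i
  · rintro ⟨F, hF, hle⟩
    refine ⟨∑ t, eF (F t), ⟨F, hF, rfl⟩, Finsupp.le_def.mpr fun i => ?_⟩
    rw [sum_eF_apply]
    exact hle i

end Aux

/-- `(x₁⋯xₙ)^(k-1)` is a socle element of `S/I^k` for the facet ideal `I` of a
simplicial complex with facet set `ℱ` iff (i) any `k` facets have nonempty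
intersection and (ii) for each `j` some `k` facets intersect exactly in `{j}`. -/
theorem stmt8 (n : ℕ) (K : Type*) [Field K]
    (ℱ : Set (Finset (Fin n))) (hne : ∀ F ∈ ℱ, F.Nonempty)
    (I : Ideal (MvPolynomial (Fin n) K))
    (hI : I = Ideal.span ((fun F : Finset (Fin n) => ∏ i ∈ F, (X i : MvPolynomial (Fin n) K)) '' ℱ))
    (k : ℕ) (hk : 1 ≤ k) :
    ((∏ i : Fin n, (X i : MvPolynomial (Fin n) K)) ^ (k - 1) ∉ I ^ k ∧
        ∀ j : Fin n, X j * (∏ i : Fin n, (X i : MvPolynomial (Fin n) K)) ^ (k - 1) ∈ I ^ k)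
      ↔ ((∀ F : Fin k → Finset (Fin n), (∀ i, F i ∈ ℱ) → ∃ j : Fin n, ∀ i, j ∈ F i) ∧
         (∀ j : Fin n, ∃ F : Fin k → Finset (Fin n),
            (∀ i, F i ∈ ℱ) ∧ Finset.univ.inf F = {j})) := by
  classical
  subst hI
  -- basic facts about the count function
  have hc_le : ∀ (F : Fin k → Finset (Fin n)) (i : Fin n),
      (Finset.univ.filter (fun t => i ∈ F t)).card ≤ k := by
    intro F i
    calc (Finset.univ.filter (fun t => i ∈ F t)).card
        ≤ (Finset.univ : Finset (Fin k)).card := Finset.card_filter_le _ _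
      _ = k := by simp
  have hc_eq : ∀ (F : Fin k → Finset (Fin n)) (i : Fin n),
      (Finset.univ.filter (fun t => i ∈ F t)).card = k ↔ ∀ t, i ∈ F t := by
    intro F i
    constructor
    · intro h t
      have h2 : Finset.univ.filter (fun t => i ∈ F t) = Finset.univ :=
        Finset.eq_univ_of_card _ (by rw [Fintype.card_fin]; exact h)
      have h3 : t ∈ Finset.univ.filter (fun t => i ∈ F t) := by
        rw [h2]; exact Finset.mem_univ t
      exact (Finset.mem_filter.mp h3).2
    · intro h
      rw [Finset.filter_true_of_mem (fun t _ => h t)]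
      simp
  have hc_lt : ∀ (F : Fin k → Finset (Fin n)) (i : Fin n),
      (Finset.univ.filter (fun t => i ∈ F t)).card ≤ k - 1 ↔ ¬ ∀ t, i ∈ F t := by
    intro F i
    rw [← hc_eq F i]
    have := hc_le F i
    omega
  -- exponent vectors
  set d0 : Fin n →₀ ℕ := (k - 1) • eF (Finset.univ : Finset (Fin n)) with hd0
  have hd0_apply : ∀ i, d0 i = k - 1 := by
    intro i
    rw [hd0, Finsupp.smul_apply, eF_apply, if_pos (Finset.mem_univ i), smul_eq_mul, mul_one]
  have hu : (∏ i : Fin n, (X i : MvPolynomial (Fin n) K)) ^ (k - 1) = monomial d0 1 := by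
    rw [prod_X_eq, monomial_pow, one_pow, hd0]
  -- criterion for u
  have crit1 : (∏ i : Fin n, (X i : MvPolynomial (Fin n) K)) ^ (k - 1) ∈
      (Ideal.span ((fun F : Finset (Fin n) =>
        ∏ i ∈ F, (X i : MvPolynomial (Fin n) K)) '' ℱ)) ^ k ↔
      ∃ F : Fin k → Finset (Fin n), (∀ i, F i ∈ ℱ) ∧ ∀ i, ¬ ∀ t, i ∈ F t := by
    rw [hu, mem_pow_iff]
    refine exists_congr fun F => and_congr_right fun _ => forall_congr' fun i => ?_
    rw [hd0_apply, hc_lt]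
  -- criterion for x_j * u
  have crit2 : ∀ j : Fin n,
      (X j * (∏ i : Fin n, (X i : MvPolynomial (Fin n) K)) ^ (k - 1) ∈
        (Ideal.span ((fun F : Finset (Fin n) =>
          ∏ i ∈ F, (X i : MvPolynomial (Fin n) K)) '' ℱ)) ^ k ↔
      ∃ F : Fin k → Finset (Fin n), (∀ i, F i ∈ ℱ) ∧
        ∀ i, i ≠ j → ¬ ∀ t, i ∈ F t) := by
    intro j
    have hXj : X j * (∏ i : Fin n, (X i : MvPolynomial (Fin n) K)) ^ (k - 1) =
        monomial (Finsupp.single j 1 + d0) 1 := by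
      rw [hu, X, monomial_mul, one_mul]
    rw [hXj, mem_pow_iff]
    refine exists_congr fun F => and_congr_right fun _ => ?_
    constructor
    · intro h i hij
      have hh := h i
      rw [Finsupp.add_apply, Finsupp.single_apply, if_neg (Ne.symm hij),
        hd0_apply, zero_add] at hh
      exact (hc_lt F i).mp hh
    · intro h i
      by_cases hij : i = j
      · subst hij
        rw [Finsupp.add_apply, Finsupp.single_apply, if_pos rfl, hd0_apply]
        have := hc_le F i
        omega
      · rw [Finsupp.add_apply, Finsupp.single_apply, if_neg (Ne.symm hij),
          hd0_apply, zero_add]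
        exact (hc_lt F i).mpr (h i hij)
  rw [crit1]
  constructor
  · rintro ⟨h1, h2⟩
    have hi : ∀ F : Fin k → Finset (Fin n), (∀ i, F i ∈ ℱ) → ∃ j : Fin n, ∀ i, j ∈ F i := by
      intro F hF
      by_contra hno
      push_neg at hno
      exact h1 ⟨F, hF, fun i hall => by
        obtain ⟨t, ht⟩ := hno i
        exact ht (hall t)⟩
    refine ⟨hi, fun j => ?_⟩
    obtain ⟨F, hF, hprop⟩ := (crit2 j).mp (h2 j)
    obtain ⟨j0, hj0⟩ := hi F hF
    have hjj : j0 = j := by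
      by_contra hne'
      exact hprop j0 hne' hj0
    subst hjj
    refine ⟨F, hF, ?_⟩
    ext i
    rw [Finset.mem_inf, Finset.mem_singleton]
    constructor
    · intro h
      by_contra hij
      exact hprop i hij (fun t => h t (Finset.mem_univ t))
    · rintro rfl
      exact fun t _ => hj0 t
  · rintro ⟨h1, h2⟩
    constructor
    · rintro ⟨F, hF, hprop⟩
      obtain ⟨j, hj⟩ := h1 F hF
      exact hprop j hj
    · intro j
      obtain ⟨F, hF, hinf⟩ := h2 j
      refine (crit2 j).mpr ⟨F, hF, fun i hij hall => ?_⟩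
      have hmem : i ∈ Finset.univ.inf F := by
        rw [Finset.mem_inf]
        exact fun t _ => hall t
      rw [hinf, Finset.mem_singleton] at hmem
      exact hij hmem
end

section
/- Let I ⊂ S = K[x_1,...,x_n] be a squarefree monomial ideal with n > 1, and suppose (x_1···x_n)^{k−1} is a socle element of S/I^k. Then k < n. -/
open MvPolynomial

lemma prodX_aux {n : ℕ} {K : Type*} [Field K] (s : Finset (Fin n)) :
    ∏ i ∈ s, (X i : MvPolynomial (Fin n) K)
      = monomial (∑ i ∈ s, Finsupp.single i 1) 1 := by
  classical
  induction s using Finset.induction with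
  | empty => simp
  | insert _ _ h ih =>
      rw [Finset.prod_insert h, ih, Finset.sum_insert h, X, monomial_mul, one_mul]

lemma prod_monomial_aux {n : ℕ} {K : Type*} [Field K] (s : Finset (Fin n))
    (d : Fin n → (Fin n →₀ ℕ)) :
    ∏ v ∈ s, (monomial (d v) (1 : K)) = monomial (∑ v ∈ s, d v) 1 := by
  classical
  induction s using Finset.induction with
  | empty => simp
  | insert _ _ h ih =>
      rw [Finset.prod_insert h, ih, Finset.sum_insert h, monomial_mul, one_mul]

/-- If `n > 1` and `(x₁⋯xₙ)^(k-1)` is a socle element of `S/I^k` for a squarefree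
monomial ideal `I`, then `k < n`. -/
theorem stmt9 (n : ℕ) (hn : 1 < n) (K : Type*) [Field K]
    (𝒮 : Set (Finset (Fin n)))
    (I : Ideal (MvPolynomial (Fin n) K))
    (hI : I = Ideal.span ((fun F : Finset (Fin n) => ∏ i ∈ F, (X i : MvPolynomial (Fin n) K)) '' 𝒮))
    (k : ℕ) (hk : 1 ≤ k)
    (hsoc : (∏ i : Fin n, (X i : MvPolynomial (Fin n) K)) ^ (k - 1) ∉ I ^ k ∧
      ∀ j : Fin n, X j * (∏ i : Fin n, (X i : MvPolynomial (Fin n) K)) ^ (k - 1) ∈ I ^ k) :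
    k < n := by
  classical
  by_contra hlt
  push_neg at hlt
  obtain ⟨hnot, hmul⟩ := hsoc
  haveI : NeZero n := ⟨by omega⟩
  set E0 : Fin n →₀ ℕ := ∑ i : Fin n, Finsupp.single i 1 with hE0def
  have hE0 : ∀ v : Fin n, E0 v = 1 := by
    intro v
    simp [hE0def, Finsupp.finset_sum_apply, Finsupp.single_apply]
  have hm : (∏ i : Fin n, (X i : MvPolynomial (Fin n) K)) ^ (k - 1)
      = monomial ((k - 1) • E0) 1 := by
    rw [prodX_aux, monomial_pow, one_pow]
  -- Step A: for each v, some generator avoids v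
  have key : ∀ v : Fin n, ∃ H ∈ 𝒮, v ∉ H := by
    intro v
    by_contra h
    push_neg at h
    have hIle : I ≤ Ideal.span {(X v : MvPolynomial (Fin n) K)} := by
      rw [hI, Ideal.span_le]
      rintro _ ⟨F, hF, rfl⟩
      rw [SetLike.mem_coe, Ideal.mem_span_singleton]
      exact Finset.dvd_prod_of_mem _ (h F hF)
    obtain ⟨j, hj⟩ : ∃ j : Fin n, j ≠ v := by
      by_cases hv : v = ⟨0, by omega⟩
      · exact ⟨⟨1, hn⟩, by simp [hv, Fin.ext_iff]⟩
      · exact ⟨⟨0, by omega⟩, fun hc => hv hc.symm⟩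
    have hmem := Ideal.pow_right_mono hIle k (hmul j)
    rw [Ideal.span_singleton_pow, Ideal.mem_span_singleton] at hmem
    rw [hm, X_pow_eq_monomial, ← pow_one (X j), X_pow_eq_monomial, monomial_mul, one_mul,
      monomial_dvd_monomial] at hmem
    obtain ⟨h1, -⟩ := hmem
    rcases h1 with h1 | h1
    · exact one_ne_zero h1
    · have := h1 v
      simp only [Finsupp.add_apply, Finsupp.smul_apply, smul_eq_mul,
        Finsupp.single_apply, hE0] at this
      rw [if_neg hj] at this
      simp only [if_true] at this
      omega
  choose H hH hvH using key
  set eF : Finset (Fin n) → (Fin n →₀ ℕ) := fun F => ∑ i ∈ F, Finsupp.single i 1 with heFdef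
  have he : ∀ (F : Finset (Fin n)) (u : Fin n), eF F u = if u ∈ F then 1 else 0 := by
    intro F u
    simp [heFdef, Finsupp.finset_sum_apply, Finsupp.single_apply]
  have hgI : ∀ F ∈ 𝒮, (∏ i ∈ F, (X i : MvPolynomial (Fin n) K)) ∈ I := by
    intro F hF
    rw [hI]
    exact Ideal.subset_span ⟨F, hF, rfl⟩
  set P : MvPolynomial (Fin n) K :=
    (∏ v : Fin n, ∏ i ∈ H v, X i) * (∏ i ∈ H 0, X i) ^ (k - n) with hPdef
  have hP : P ∈ I ^ k := by
    have h1 : (∏ v : Fin n, ∏ i ∈ H v, (X i : MvPolynomial (Fin n) K)) ∈ I ^ n := by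
      have := Ideal.prod_mem_prod (I := fun _ : Fin n => I) (s := Finset.univ)
        (x := fun v => ∏ i ∈ H v, (X i : MvPolynomial (Fin n) K))
        (fun v _ => hgI _ (hH v))
      simpa using this
    have h2 : ((∏ i ∈ H 0, (X i : MvPolynomial (Fin n) K)) ^ (k - n)) ∈ I ^ (k - n) :=
      Ideal.pow_mem_pow (hgI _ (hH 0)) _
    have := Ideal.mul_mem_mul h1 h2
    rwa [← pow_add, Nat.add_sub_cancel' hlt] at this
  have hPmon : P = monomial ((∑ v : Fin n, eF (H v)) + (k - n) • eF (H 0)) 1 := by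
    simp only [hPdef]
    rw [Finset.prod_congr rfl (fun v _ => prodX_aux (K := K) (H v)), prod_monomial_aux,
      prodX_aux, monomial_pow, one_pow, monomial_mul, one_mul]
  have hdvd : P ∣ (∏ i : Fin n, (X i : MvPolynomial (Fin n) K)) ^ (k - 1) := by
    rw [hPmon, hm]
    refine monomial_dvd_monomial.mpr ⟨Or.inr ?_, dvd_refl 1⟩
    intro u
    simp only [Finsupp.add_apply, Finsupp.smul_apply, smul_eq_mul, Finsupp.finset_sum_apply,
      hE0]
    have hsum : (∑ v : Fin n, eF (H v) u) ≤ n - 1 := by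
      have hzero : eF (H u) u = 0 := by rw [he, if_neg (hvH u)]
      rw [← Finset.sum_erase (f := fun v => (eF (H v)) u) _ hzero]
      calc (∑ v ∈ Finset.univ.erase u, eF (H v) u)
          ≤ ∑ v ∈ Finset.univ.erase u, 1 := by
            refine Finset.sum_le_sum fun v _ => ?_
            rw [he]; split <;> omega
        _ = n - 1 := by
            rw [Finset.sum_const, smul_eq_mul, mul_one,
              Finset.card_erase_of_mem (Finset.mem_univ u), Finset.card_univ, Fintype.card_fin]
    have h0 : eF (H 0) u ≤ 1 := by rw [he]; split <;> omega
    have : (k - n) * eF (H 0) u ≤ k - n := by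
      calc (k - n) * eF (H 0) u ≤ (k - n) * 1 := Nat.mul_le_mul_left _ h0
        _ = k - n := mul_one _
    omega
  obtain ⟨c, hc⟩ := hdvd
  exact hnot (hc ▸ Ideal.mul_mem_right c _ hP)
end

section
/- Let I ⊂ S = K[x_1,...,x_n] be a squarefree monomial ideal generated in degree d with kd = (k−1)n + 1. If u = x_1^{a_1}···x_n^{a_n} is a monomial socle element of S/I^k, then u = (x_1···x_n)^{k−1}. -/
open MvPolynomial

open Pointwise in
private lemma stmt15_image_mul {n : ℕ} {K : Type*} [Field K] (S T : Set (Fin n →₀ ℕ)) :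
    ((fun s => monomial s (1 : K)) '' S) * ((fun s => monomial s (1 : K)) '' T)
      = (fun s => monomial s (1 : K)) '' (S + T) := by
  ext x
  simp only [Set.mem_mul, Set.mem_add, Set.mem_image]
  constructor
  · rintro ⟨_, ⟨s, hs, rfl⟩, _, ⟨t, ht, rfl⟩, rfl⟩
    exact ⟨s + t, ⟨s, hs, t, ht, rfl⟩, by rw [monomial_mul, one_mul]⟩
  · rintro ⟨_, ⟨s, hs, t, ht, rfl⟩, rfl⟩
    exact ⟨monomial s 1, ⟨s, hs, rfl⟩, monomial t 1, ⟨t, ht, rfl⟩,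
      by rw [monomial_mul, one_mul]⟩

open Pointwise in
private lemma stmt15_image_pow {n : ℕ} {K : Type*} [Field K] (S : Set (Fin n →₀ ℕ)) (k : ℕ) :
    ((fun s => monomial s (1 : K)) '' S) ^ k = (fun s => monomial s (1 : K)) '' (k • S) := by
  induction k with
  | zero =>
      rw [pow_zero, zero_nsmul]
      ext x
      simp only [Set.mem_one, Set.mem_image, Set.mem_zero]
      constructor
      · rintro rfl; exact ⟨0, rfl, by simp⟩
      · rintro ⟨s, rfl, rfl⟩; simp
  | succ k ih =>
      rw [pow_succ, ih, stmt15_image_mul, ← succ_nsmul]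

open Pointwise in
private lemma stmt15_mem_nsmul {n : ℕ} {E : Set (Fin n →₀ ℕ)} {d : ℕ}
    (hE : ∀ b ∈ E, (∀ i, b i ≤ 1) ∧ ∑ i, b i = d) :
    ∀ k, ∀ s ∈ k • E, (∀ i, s i ≤ k) ∧ ∑ i, s i = k * d := by
  intro k
  induction k with
  | zero =>
      intro s hs
      rw [zero_nsmul, Set.mem_zero] at hs
      subst hs; simp
  | succ k ih =>
      intro s hs
      rw [succ_nsmul, Set.mem_add] at hs
      obtain ⟨x, hx, y, hy, rfl⟩ := hs
      obtain ⟨hx1, hx2⟩ := ih x hx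
      obtain ⟨hy1, hy2⟩ := hE y hy
      refine ⟨fun i => ?_, ?_⟩
      · have := hx1 i; have := hy1 i
        simp only [Finsupp.add_apply]; omega
      · simp only [Finsupp.add_apply, Finset.sum_add_distrib, hx2, hy2]
        ring

open Pointwise in
/-- If `I` is a squarefree monomial ideal generated in degree `d` with
`k*d = (k-1)*n + 1` and `x^a` is a monomial socle element of `S/I^k`, then
`x^a = (x₁⋯xₙ)^(k-1)`. -/
theorem stmt15 (n d k : ℕ) (hk : 1 ≤ k) (hkd : k * d = (k - 1) * n + 1)
    (K : Type*) [Field K]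
    (𝒮 : Set (Finset (Fin n))) (hdeg : ∀ F ∈ 𝒮, F.card = d)
    (I : Ideal (MvPolynomial (Fin n) K))
    (hI : I = Ideal.span ((fun F : Finset (Fin n) => ∏ i ∈ F, (X i : MvPolynomial (Fin n) K)) '' 𝒮))
    (a : Fin n →₀ ℕ)
    (hsoc : (monomial a (1 : K)) ∉ I ^ k ∧ ∀ i : Fin n, X i * monomial a (1 : K) ∈ I ^ k) :
    (monomial a (1 : K)) = (∏ i : Fin n, (X i : MvPolynomial (Fin n) K)) ^ (k - 1) := by
  classical
  set E : Set (Fin n →₀ ℕ) := (fun F : Finset (Fin n) => ∑ i ∈ F, Finsupp.single i 1) '' 𝒮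
    with hEdef
  have hprod : ∀ F : Finset (Fin n),
      (∏ i ∈ F, (X i : MvPolynomial (Fin n) K)) = monomial (∑ i ∈ F, Finsupp.single i 1) 1 := by
    intro F; rw [monomial_sum_one]; rfl
  have hIE : I = Ideal.span ((fun s => monomial s (1 : K)) '' E) := by
    rw [hI, hEdef, Set.image_image]
    congr 1
    exact Set.image_congr fun F _ => hprod F
  have key : ∀ m : Fin n →₀ ℕ,
      (monomial m (1 : K) ∈ I ^ k ↔ ∃ s ∈ k • E, s ≤ m) := by
    intro m
    rw [hIE,
      show Ideal.span ((fun s => monomial s (1 : K)) '' E) ^ k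
          = Ideal.span (((fun s => monomial s (1 : K)) '' E) ^ k) from Submodule.span_pow _ k,
      stmt15_image_pow, mem_ideal_span_monomial_image]
    simp [support_monomial]
  have hEprops : ∀ b ∈ E, (∀ i, b i ≤ 1) ∧ ∑ i, b i = d := by
    rintro b ⟨F, hF, rfl⟩
    constructor
    · intro i
      rw [Finsupp.finset_sum_apply]
      simp only [Finsupp.single_apply]
      rw [Finset.sum_ite_eq' F i (fun _ => 1)]
      split <;> omega
    · have : ∀ i : Fin n, (∑ j ∈ F, Finsupp.single j (1 : ℕ)) i
          = ∑ j ∈ F, (Finsupp.single j (1 : ℕ)) i := fun i => Finsupp.finset_sum_apply F _ i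
      simp only [this, Finsupp.single_apply]
      rw [Finset.sum_comm]
      have : ∀ j : Fin n, (∑ i : Fin n, if j = i then (1:ℕ) else 0) = 1 := by
        intro j; rw [Finset.sum_ite_eq Finset.univ j (fun _ => 1)]; simp
      simp only [this, Finset.sum_const, smul_eq_mul, mul_one]
      exact hdeg F hF
  have hXmul : ∀ i : Fin n, (X i : MvPolynomial (Fin n) K) * monomial a 1
      = monomial (Finsupp.single i 1 + a) 1 := by
    intro i
    rw [X, monomial_mul, one_mul]
  have hs : ∀ i : Fin n, ∃ s ∈ k • E, s ≤ Finsupp.single i 1 + a := by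
    intro i
    exact (key _).mp (by rw [← hXmul i]; exact hsoc.2 i)
  -- Claim 1 : each exponent is at most k-1
  have claim1 : ∀ i, a i ≤ k - 1 := by
    intro i
    by_contra hcon
    push_neg at hcon
    obtain ⟨s, hsE, hsle⟩ := hs i
    obtain ⟨hbd, -⟩ := stmt15_mem_nsmul hEprops k s hsE
    apply hsoc.1
    refine (key a).mpr ⟨s, hsE, ?_⟩
    rw [Finsupp.le_def] at hsle ⊢
    intro j
    have h1 := hsle j
    have h2 := hbd j
    simp only [Finsupp.add_apply, Finsupp.single_apply] at h1
    by_cases hij : i = j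
    · subst hij; simp only [if_pos rfl] at h1; omega
    · rw [if_neg hij] at h1; omega
  -- Claim 2 : total degree is at least (k-1)*n
  have claim2 : (k - 1) * n ≤ ∑ i, a i := by
    rcases Nat.eq_zero_or_pos n with h0 | h0
    · simp [h0]
    · obtain ⟨s, hsE, hsle⟩ := hs ⟨0, h0⟩
      obtain ⟨-, hsum⟩ := stmt15_mem_nsmul hEprops k s hsE
      rw [Finsupp.le_def] at hsle
      have hle : ∑ i, (Finsupp.single (⟨0, h0⟩ : Fin n) 1 + a : Fin n →₀ ℕ) i ≥ ∑ i, s i :=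
        Finset.sum_le_sum fun i _ => hsle i
      have hone : ∑ i, (Finsupp.single (⟨0, h0⟩ : Fin n) 1 + a : Fin n →₀ ℕ) i = 1 + ∑ i, a i := by
        simp only [Finsupp.add_apply, Finset.sum_add_distrib]
        congr 1
        simp [Finsupp.single_apply]
      omega
  -- Claim 3 : all exponents equal k-1
  have hsum_eq : ∑ i, a i = ∑ _i : Fin n, (k - 1) := by
    have h1 : ∑ i, a i ≤ ∑ _i : Fin n, (k - 1) := Finset.sum_le_sum fun i _ => claim1 i
    have h2 : ∑ _i : Fin n, (k - 1) = (k - 1) * n := by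
      simp [Finset.sum_const, mul_comm]
    omega
  have claim3 : ∀ i, a i = k - 1 := fun i =>
    (Finset.sum_eq_sum_iff_of_le fun i _ => claim1 i).mp hsum_eq i (Finset.mem_univ i)
  -- Finish
  have hrhs : (∏ i : Fin n, (X i : MvPolynomial (Fin n) K)) ^ (k - 1)
      = monomial ((k - 1) • ∑ i : Fin n, Finsupp.single i 1) 1 := by
    rw [hprod Finset.univ, monomial_pow, one_pow]
  have hab : a = (k - 1) • ∑ i : Fin n, Finsupp.single i 1 := by
    ext i
    rw [Finsupp.smul_apply, Finsupp.finset_sum_apply]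
    simp only [Finsupp.single_apply, smul_eq_mul]
    rw [Finset.sum_ite_eq' Finset.univ i (fun _ => 1)]
    simp [claim3 i]
  rw [hrhs, hab]
end

section
/- Let k ≥ 2, n = k + 1, and let I ⊂ S = K[x_1,...,x_n] be the ideal generated by all squarefree monomials of degree n − 1 (= k). Then (x_1···x_n)^{k−1} is a socle element of S/I^k; in particular depth S/I^k = 0. -/
open MvPolynomial Pointwise

private lemma coeff_mul_zero_of_lt {σ K : Type*} [DecidableEq σ] [CommSemiring K] (a b : ℕ)
    (f g : MvPolynomial σ K)
    (hf : ∀ d : σ →₀ ℕ, (d.sum fun _ e => e) < a → coeff d f = 0)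
    (hg : ∀ d : σ →₀ ℕ, (d.sum fun _ e => e) < b → coeff d g = 0) :
    ∀ d : σ →₀ ℕ, (d.sum fun _ e => e) < a + b → coeff d (f * g) = 0 := by
  intro d hd
  rw [coeff_mul]
  apply Finset.sum_eq_zero
  rintro ⟨u, v⟩ huv
  rw [Finset.HasAntidiagonal.mem_antidiagonal] at huv
  have hsum : (u.sum fun _ e => e) + (v.sum fun _ e => e) = d.sum fun _ e => e := by
    rw [← huv]
    exact (Finsupp.sum_add_index' (h := fun _ e => e) (fun _ => rfl) (fun _ _ _ => rfl)).symm
  rcases lt_or_ge (u.sum fun _ e => e) a with h | h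
  · simp [hf u h]
  · have : (v.sum fun _ e => e) < b := by omega
    simp [hg v this]

private lemma coeff_prod_X_zero {σ K : Type*} [CommSemiring K] [DecidableEq σ] (t : Finset σ) :
    ∀ d : σ →₀ ℕ, (d.sum fun _ e => e) < t.card →
      coeff d (∏ i ∈ t, (X i : MvPolynomial σ K)) = 0 := by
  induction t using Finset.cons_induction with
  | empty => exact fun d hd => absurd hd (Nat.not_lt_zero _)
  | cons a t ha ih =>
    rw [Finset.prod_cons, Finset.card_cons]
    have hX : ∀ d : σ →₀ ℕ, (d.sum fun _ e => e) < 1 →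
        coeff d (X a : MvPolynomial σ K) = 0 := by
      intro d hd
      rw [coeff_X']
      rw [if_neg]
      intro h
      rw [← h] at hd
      simp [Finsupp.sum_single_index] at hd
    have := coeff_mul_zero_of_lt 1 t.card (X a) (∏ i ∈ t, (X i : MvPolynomial σ K)) hX ih
    intro d hd
    exact this d (by omega)

private lemma coeff_set_pow_zero {σ K : Type*} [DecidableEq σ] [CommSemiring K] (k : ℕ)
    (s : Set (MvPolynomial σ K))
    (hs : ∀ g ∈ s, ∀ d : σ →₀ ℕ, (d.sum fun _ e => e) < k → coeff d g = 0) :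
    ∀ n : ℕ, ∀ g ∈ s ^ n, ∀ d : σ →₀ ℕ, (d.sum fun _ e => e) < n * k → coeff d g = 0 := by
  intro n
  induction n with
  | zero => intro g hg d hd; exact absurd hd (by simp)
  | succ n ih =>
    intro g hg d hd
    rw [pow_succ] at hg
    rcases Set.mem_mul.mp hg with ⟨a, ha, b, hb, rfl⟩
    exact coeff_mul_zero_of_lt (n * k) k a b (ih a ha) (hs b hb) d
      (by rwa [Nat.succ_mul] at hd)

/-- Let `k ≥ 2`, `n = k + 1`, and `I` the ideal generated by all squarefree
monomials of degree `n - 1`. Then `(x₁⋯xₙ)^(k-1)` is a socle element of `S/I^k`. -/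
theorem stmt17 (k : ℕ) (hk : 2 ≤ k) (K : Type*) [Field K]
    (I : Ideal (MvPolynomial (Fin (k + 1)) K))
    (hI : I = Ideal.span {m : MvPolynomial (Fin (k + 1)) K |
      ∃ j : Fin (k + 1), m = ∏ i ∈ Finset.univ.erase j, (X i : MvPolynomial (Fin (k + 1)) K)}) :
    ((∏ i : Fin (k + 1), (X i : MvPolynomial (Fin (k + 1)) K)) ^ (k - 1) ∉ I ^ k ∧
      ∀ j : Fin (k + 1),
        X j * (∏ i : Fin (k + 1), (X i : MvPolynomial (Fin (k + 1)) K)) ^ (k - 1) ∈ I ^ k) := by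
  set s : Set (MvPolynomial (Fin (k + 1)) K) :=
    {m : MvPolynomial (Fin (k + 1)) K |
      ∃ j : Fin (k + 1), m = ∏ i ∈ Finset.univ.erase j, (X i : MvPolynomial (Fin (k + 1)) K)}
    with hs_def
  set P : MvPolynomial (Fin (k + 1)) K := ∏ i : Fin (k + 1), X i with hP_def
  set m : Fin (k + 1) → MvPolynomial (Fin (k + 1)) K :=
    fun j => ∏ i ∈ Finset.univ.erase j, X i with hm_def
  have hXne : ∀ i : Fin (k + 1), (X i : MvPolynomial (Fin (k + 1)) K) ≠ 0 :=
    fun i => X_ne_zero i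
  have hPne : P ≠ 0 := Finset.prod_ne_zero_iff.mpr fun i _ => hXne i
  have hmne : ∀ j, m j ≠ 0 := fun j => Finset.prod_ne_zero_iff.mpr fun i _ => hXne i
  have hXm : ∀ j, X j * m j = P := fun j => Finset.mul_prod_erase _ _ (Finset.mem_univ j)
  constructor
  · -- non-membership
    intro hmem
    -- generators have coefficients vanishing below degree k
    have hgen : ∀ g ∈ s, ∀ d : Fin (k + 1) →₀ ℕ, (d.sum fun _ e => e) < k → coeff d g = 0 := by
      rintro g ⟨j, rfl⟩ d hd
      have hcard : (Finset.univ.erase j).card = k := by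
        rw [Finset.card_erase_of_mem (Finset.mem_univ j)]
        simp
      exact coeff_prod_X_zero _ d (by rw [hcard]; exact hd)
    have hpow : ∀ f ∈ I ^ k, ∀ d : Fin (k + 1) →₀ ℕ,
        (d.sum fun _ e => e) < k * k → coeff d f = 0 := by
      intro f hf
      rw [hI, Ideal.span] at hf
      rw [Submodule.span_pow] at hf
      refine Submodule.span_induction ?_ ?_ ?_ ?_ hf
      · exact fun g hg => coeff_set_pow_zero k s hgen k g hg
      · intro d _; simp
      · intro f g _ _ hf hg d hd; simp [hf d hd, hg d hd]
      · intro r f _ hf d hd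
        have := coeff_mul_zero_of_lt 0 (k * k) r f
          (fun d hd => absurd hd (Nat.not_lt_zero _)) hf d (by omega)
        simpa using this
    -- but P^(k-1) has total degree < k*k and is nonzero
    have hne : P ^ (k - 1) ≠ 0 := pow_ne_zero _ hPne
    apply hne
    ext d
    rw [coeff_zero]
    by_cases hd : coeff d (P ^ (k - 1)) = 0
    · exact hd
    · have hsup : d ∈ (P ^ (k - 1)).support := by
        rwa [MvPolynomial.mem_support_iff]
      have h1 : (d.sum fun _ e => e) ≤ (P ^ (k - 1)).totalDegree := le_totalDegree hsup
      have h2 : (P ^ (k - 1)).totalDegree ≤ (k - 1) * (k + 1) := by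
        calc (P ^ (k - 1)).totalDegree ≤ (k - 1) * P.totalDegree := totalDegree_pow _ _
          _ ≤ (k - 1) * (k + 1) := by
            apply Nat.mul_le_mul_left
            calc P.totalDegree ≤ ∑ i : Fin (k + 1), (X i : MvPolynomial (Fin (k + 1)) K).totalDegree :=
                totalDegree_finset_prod _ _
              _ ≤ k + 1 := by simp [totalDegree_X]
      have h3 : (k - 1) * (k + 1) < k * k := by
        obtain ⟨j, rfl⟩ : ∃ j, k = j + 2 := ⟨k - 2, by omega⟩
        have : (j + 2 - 1) * (j + 2 + 1) = (j + 1) * (j + 3) := by norm_num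
        rw [this]
        nlinarith
      exact hpow _ hmem d (by omega)
  · -- membership
    intro j
    have hmI : ∀ i, m i ∈ I := by
      intro i
      rw [hI]
      exact Ideal.subset_span ⟨i, rfl⟩
    -- ∏ i, m i = P ^ k
    have hprod : ∏ i : Fin (k + 1), m i = P ^ k := by
      have h1 : ∏ i : Fin (k + 1), (X i * m i) = P ^ (k + 1) := by
        simp only [hXm]
        rw [Finset.prod_const, Finset.card_univ, Fintype.card_fin]
      rw [Finset.prod_mul_distrib, ← hP_def, pow_succ'] at h1
      exact mul_left_cancel₀ hPne h1
    -- key identity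
    have hkey : X j * P ^ (k - 1) = ∏ i ∈ Finset.univ.erase j, m i := by
      apply mul_left_cancel₀ (hmne j)
      have h4 : m j * ∏ i ∈ Finset.univ.erase j, m i = ∏ i : Fin (k + 1), m i :=
        Finset.mul_prod_erase _ _ (Finset.mem_univ j)
      rw [h4, hprod]
      calc m j * (X j * P ^ (k - 1)) = (X j * m j) * P ^ (k - 1) := by ring
        _ = P * P ^ (k - 1) := by rw [hXm j]
        _ = P ^ k := by
          rw [← pow_succ']
          congr 1
          omega
    rw [hkey]
    -- product of k elements of I lies in I^k
    have hgen2 : ∀ (t : Finset (Fin (k + 1))), (∀ i ∈ t, m i ∈ I) →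
        (∏ i ∈ t, m i) ∈ I ^ t.card := by
      intro t
      induction t using Finset.cons_induction with
      | empty => intro _; simp
      | cons a t ha ih =>
        intro h
        rw [Finset.prod_cons, Finset.card_cons, pow_succ, mul_comm (I ^ t.card) I]
        exact Ideal.mul_mem_mul (h a (Finset.mem_cons_self _ _))
          (ih fun i hi => h i (Finset.mem_cons_of_mem hi))
    have hcard : (Finset.univ.erase j).card = k := by
      rw [Finset.card_erase_of_mem (Finset.mem_univ j)]
      simp
    have := hgen2 (Finset.univ.erase j) (fun i _ => hmI i)
    rwa [hcard] at this
end
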